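/- arXiv:1906.04697 — 4 statements merged into one kernel-verified Lean document; each statement's English description precedes it below -/
import Mathlib

section
/- Fix a realization of the empirical Bellman operators T̂₁, T̂₂, … and of the recentering operator T̃_N, a recentering point θ̄, and define the iterates θ_{t+1} = (1−λ_t)·θ_t + λ_t·{T̂_t(θ_t) − T̂_t(θ̄) + T̃_N(θ̄)} with stepsize λ_t = 1/(1+(1−γ)t), the noise terms W_t = −(T̂_t(θ̄) − T̂_t(θ*)) − T(θ*) + T̃_N(θ̄), and the auxiliary process path₁ = 0, path_{t+1} = (1−λ_t)·path_t + λ_t·W_t. Then for every iteration t ≥ 1, ‖θ_{t+1} − θ*‖_∞ ≤ (2/(1+(1−γ)t))·(‖θ₁ − θ*‖_∞ + Σ_{ℓ=1}^{t} ‖path_ℓ‖_∞) + ‖path_{t+1}‖_∞. -/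
/-! Put `e_t = θ_t - θ* - path_t`. Because `T(θ*) = θ*`, the noise `W_t` cancels the
recentering terms exactly, leaving `e_{t+1} = (1 - λ_t) e_t + λ_t (T̂_t(θ_t) - T̂_t(θ*))`.
Contractivity of `T̂_t` and `‖θ_t - θ*‖ ≤ ‖e_t‖ + ‖path_t‖` then give
`‖e_{t+1}‖ ≤ (1 - λ_t) ‖e_t‖ + λ_t γ (‖e_t‖ + ‖path_t‖)`, and multiplying by
`1 / λ_t = 1 + (1 - γ) t` turns this into the telescoping inequality
`(1 + (1 - γ) t) ‖e_{t+1}‖ ≤ (1 + (1 - γ) (t - 1)) ‖e_t‖ + ‖path_t‖`. -/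

open MeasureTheory ProbabilityTheory Finset

namespace VRQ

variable {S A : Type} [Fintype S] [Fintype A] [Nonempty S] [Nonempty A]

/-- A finite Markov decision process: transition probabilities and rewards. -/
structure MDP (S A : Type) [Fintype S] [Fintype A] where
  P : S → A → S → ℝ
  P_nonneg : ∀ s a s', 0 ≤ P s a s'
  P_sum_one : ∀ s a, ∑ s', P s a s' = 1
  r : S → A → ℝ

/-- `vmax θ s = max_{a} θ s a`. -/
noncomputable def vmax (θ : S → A → ℝ) (s : S) : ℝ :=
  (Finset.univ : Finset A).sup' Finset.univ_nonempty (θ s)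

/-- Sup-norm over state-action pairs. -/
noncomputable def supNorm (θ : S → A → ℝ) : ℝ :=
  (Finset.univ : Finset (S × A)).sup' Finset.univ_nonempty fun p => |θ p.1 p.2|

/-- The population Bellman operator. -/
noncomputable def bellman (M : MDP S A) (γ : ℝ) (θ : S → A → ℝ) : S → A → ℝ :=
  fun s a => M.r s a + γ * ∑ s', M.P s a s' * vmax θ s'

/-- The empirical Bellman operator built from the sample `X`. -/
noncomputable def empBellman (M : MDP S A) (γ : ℝ) (X : S → A → S) (θ : S → A → ℝ) :
    S → A → ℝ :=
  fun s a => M.r s a + γ * vmax θ (X s a)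

/-- The entrywise standard deviation `σ(θ)(s,a)` of the empirical Bellman operator at `θ`. -/
noncomputable def bellStd (M : MDP S A) (γ : ℝ) (θ : S → A → ℝ) : S → A → ℝ :=
  fun s a => Real.sqrt (γ ^ 2 *
    (∑ s', M.P s a s' * (vmax θ s') ^ 2 - (∑ s', M.P s a s' * vmax θ s') ^ 2))

/-- Monte Carlo approximation `T̃_N` of the Bellman operator from `N` samples. -/
noncomputable def mcBellman (M : MDP S A) (γ : ℝ) (N : ℕ) (Y : ℕ → S → A → S)
    (θ : S → A → ℝ) : S → A → ℝ :=
  fun s a => (N : ℝ)⁻¹ * ∑ i ∈ Finset.range N, empBellman M γ (Y i) θ s a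

/-- Stepsize `λ_k = 1/(1+(1-γ)k)`. -/
noncomputable def stepSize (γ : ℝ) (k : ℕ) : ℝ := 1 / (1 + (1 - γ) * k)

/-- Variance-reduced `Q`-learning iterates within one epoch: `vrIter ... t = θ_{t+1}`,
with `θ₁ = θbar` and `θ_{t+1} = (1-λ_t) θ_t + λ_t (T̂_t(θ_t) - T̂_t(θbar) + rec)`. -/
noncomputable def vrIter (M : MDP S A) (γ : ℝ) (θbar rec : S → A → ℝ)
    (X : ℕ → S → A → S) : ℕ → S → A → ℝ
  | 0 => θbar
  | t + 1 => fun s a =>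
      (1 - stepSize γ (t + 1)) * vrIter M γ θbar rec X t s a +
        stepSize γ (t + 1) *
          (empBellman M γ (X (t + 1)) (vrIter M γ θbar rec X t) s a -
            empBellman M γ (X (t + 1)) θbar s a + rec s a)

/-- One epoch of variance-reduced `Q`-learning. -/
noncomputable def runEpoch (M : MDP S A) (γ : ℝ) (K N : ℕ)
    (X Y : ℕ → S → A → S) (θbar : S → A → ℝ) : S → A → ℝ :=
  vrIter M γ θbar (mcBellman M γ N Y θbar) X K

/-- The full variance-reduced `Q`-learning algorithm: `vrQLearn ... m = θ̄_m`. -/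
noncomputable def vrQLearn (M : MDP S A) (γ : ℝ) (K : ℕ) (Nm : ℕ → ℕ)
    (X Y : ℕ → ℕ → S → A → S) (θ0 : S → A → ℝ) : ℕ → S → A → ℝ
  | 0 => θ0
  | m + 1 => runEpoch M γ K (Nm (m + 1)) (X (m + 1)) (Y (m + 1))
      (vrQLearn M γ K Nm X Y θ0 m)

/-- Auxiliary noise process: `path₁ = 0`, `path_{t+1} = (1-λ_t) path_t + λ_t W_t`. -/
noncomputable def auxPath (γ : ℝ) (W : ℕ → S → A → ℝ) : ℕ → S → A → ℝ
  | 0 => fun _ _ => 0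
  | t + 1 =>
      if t = 0 then fun _ _ => 0
      else fun s a => (1 - stepSize γ t) * auxPath γ W t s a + stepSize γ t * W t s a

/-- `X : Ω → S → A → S` is a generative-model sample: each coordinate `X ω s a`
is distributed according to `P(· | s,a)`. -/
def IsSample {Ω : Type} [MeasurableSpace Ω] [MeasurableSpace S] (μ : Measure Ω)
    (M : MDP S A) (X : Ω → S → A → S) : Prop :=
  (∀ s a, Measurable fun ω => X ω s a) ∧
    ∀ s a s', μ {ω | X ω s a = s'} = ENNReal.ofReal (M.P s a s')

/-- Policy transition operator `P^π`. -/
noncomputable def polOp (M : MDP S A) (π : S → A) (u : S → A → ℝ) : S → A → ℝ :=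
  fun s a => ∑ s', M.P s a s' * u s' (π s')

/-- The resolvent `(I - γ P^π)⁻¹ = Σ_{k≥0} γ^k (P^π)^k`. -/
noncomputable def resolvent (M : MDP S A) (γ : ℝ) (π : S → A) (u : S → A → ℝ) :
    S → A → ℝ :=
  fun s a => ∑' k : ℕ, γ ^ k * (polOp M π)^[k] u s a


end VRQ

namespace VRQ

lemma one_le_one_add_sub_mul {γ : ℝ} (hγ : γ ≤ 1) (k : ℕ) : 1 ≤ 1 + (1 - γ) * k := by
  have := mul_nonneg (sub_nonneg.2 hγ) k.cast_nonneg (α := ℝ)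
  linarith

lemma stepSize_nonneg {γ : ℝ} (hγ : γ ≤ 1) (k : ℕ) : 0 ≤ stepSize γ k :=
  one_div_nonneg.2 (zero_le_one.trans (one_le_one_add_sub_mul hγ k))

lemma stepSize_le_one {γ : ℝ} (hγ : γ ≤ 1) (k : ℕ) : stepSize γ k ≤ 1 :=
  div_le_one_of_le₀ (one_le_one_add_sub_mul hγ k)
    (zero_le_one.trans (one_le_one_add_sub_mul hγ k))

lemma one_add_sub_mul_mul_stepSize {γ : ℝ} (hγ : γ ≤ 1) (k : ℕ) :
    (1 + (1 - γ) * k) * stepSize γ k = 1 :=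
  mul_one_div_cancel (zero_lt_one.trans_le (one_le_one_add_sub_mul hγ k)).ne'

lemma one_add_sub_mul_le_of_le_stepSize_average {γ : ℝ} (hγ : γ ≤ 1) {u q : ℕ → ℝ}
    (hq : ∀ k, 0 ≤ q k)
    (hu : ∀ k, u (k + 1) ≤
      (1 - stepSize γ (k + 1)) * u k + stepSize γ (k + 1) * (γ * (u k + q (k + 1))))
    (k : ℕ) :
    (1 + (1 - γ) * k) * u k ≤ u 0 + ∑ ℓ ∈ Finset.Icc 1 k, q ℓ := by
  induction k with
  | zero => simp
  | succ k ih =>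
    have hinv := one_add_sub_mul_mul_stepSize hγ (k + 1)
    have hγq : γ * q (k + 1) ≤ q (k + 1) := mul_le_of_le_one_left (hq _) hγ
    calc (1 + (1 - γ) * ↑(k + 1)) * u (k + 1)
        ≤ (1 + (1 - γ) * ↑(k + 1)) * ((1 - stepSize γ (k + 1)) * u k +
            stepSize γ (k + 1) * (γ * (u k + q (k + 1)))) :=
          mul_le_mul_of_nonneg_left (hu k) (zero_le_one.trans (one_le_one_add_sub_mul hγ _))
      _ = (1 + (1 - γ) * k) * u k + γ * q (k + 1) := by
          push_cast at hinv ⊢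
          linear_combination (γ * (u k + q (k + 1)) - u k) * hinv
      _ ≤ u 0 + ∑ ℓ ∈ Finset.Icc 1 (k + 1), q ℓ := by
          rw [Finset.sum_Icc_succ_top (Nat.le_add_left 1 k)]
          linarith

section

variable {S A : Type} [Fintype S] [Fintype A]

lemma supNorm_eq_norm [Nonempty S] [Nonempty A] (θ : S → A → ℝ) : supNorm θ = ‖θ‖ := by
  have le_supNorm (p : S × A) : |θ p.1 p.2| ≤ supNorm θ :=
    Finset.le_sup' (fun p : S × A => |θ p.1 p.2|) (Finset.mem_univ p)
  refine le_antisymm (Finset.sup'_le _ _ fun p _ => ?_) ?_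
  · rw [← Real.norm_eq_abs]
    exact (norm_le_pi_norm (θ p.1) p.2).trans (norm_le_pi_norm θ p.1)
  · have hθ : 0 ≤ supNorm θ := (abs_nonneg _).trans (le_supNorm (Classical.arbitrary _))
    exact (pi_norm_le_iff_of_nonneg hθ).2 fun s =>
      (pi_norm_le_iff_of_nonneg hθ).2 fun a => le_supNorm (s, a)

lemma supNorm_sub [Nonempty S] [Nonempty A] (θ θ' : S → A → ℝ) :
    supNorm (fun s a => θ s a - θ' s a) = ‖θ - θ'‖ :=
  supNorm_eq_norm (θ - θ')

variable [Nonempty A]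

lemma vmax_le_vmax_add_norm_sub (θ θ' : S → A → ℝ) (x : S) :
    vmax θ x ≤ vmax θ' x + ‖θ - θ'‖ :=
  Finset.sup'_le _ _ fun a _ => by
    have hdiff : θ x a - θ' x a ≤ ‖θ - θ'‖ :=
      (le_abs_self _).trans <|
        (norm_le_pi_norm (θ x - θ' x) a).trans (norm_le_pi_norm (θ - θ') x)
    have hθ' : θ' x a ≤ vmax θ' x := Finset.le_sup' (θ' x) (Finset.mem_univ a)
    linarith

lemma abs_vmax_sub_vmax_le (θ θ' : S → A → ℝ) (x : S) :
    |vmax θ x - vmax θ' x| ≤ ‖θ - θ'‖ := by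
  have h₁ := vmax_le_vmax_add_norm_sub θ θ' x
  have h₂ := vmax_le_vmax_add_norm_sub θ' θ x
  rw [norm_sub_rev] at h₂
  exact abs_sub_le_iff.2 ⟨by linarith, by linarith⟩

lemma norm_empBellman_sub_le (M : MDP S A) {γ : ℝ} (hγ : 0 ≤ γ) (X : S → A → S)
    (θ θ' : S → A → ℝ) :
    ‖empBellman M γ X θ - empBellman M γ X θ'‖ ≤ γ * ‖θ - θ'‖ := by
  refine (pi_norm_le_iff_of_nonneg (by positivity)).2 fun s =>
    (pi_norm_le_iff_of_nonneg (by positivity)).2 fun a => ?_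
  simp only [Pi.sub_apply, empBellman, add_sub_add_left_eq_sub, ← mul_sub, Real.norm_eq_abs,
    abs_mul, abs_of_nonneg hγ]
  exact mul_le_mul_of_nonneg_left (abs_vmax_sub_vmax_le θ θ' _) hγ

lemma vrIter_sub_sub_auxPath_succ (M : MDP S A) (γ : ℝ) (θstar θbar rec : S → A → ℝ)
    (X : ℕ → S → A → S) (W : ℕ → S → A → ℝ)
    (hW : ∀ t s a, W t s a =
      -(empBellman M γ (X t) θbar s a - empBellman M γ (X t) θstar s a) - θstar s a + rec s a)
    (k : ℕ) :
    vrIter M γ θbar rec X (k + 1) - θstar - auxPath γ W (k + 2) =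
      (1 - stepSize γ (k + 1)) • (vrIter M γ θbar rec X k - θstar - auxPath γ W (k + 1)) +
        stepSize γ (k + 1) •
          (empBellman M γ (X (k + 1)) (vrIter M γ θbar rec X k) -
            empBellman M γ (X (k + 1)) θstar) := by
  funext s a
  simp only [vrIter, auxPath, Nat.succ_ne_zero, if_false, hW, Pi.add_apply, Pi.sub_apply,
    Pi.smul_apply, smul_eq_mul]
  ring

lemma norm_vrIter_sub_sub_auxPath_succ_le (M : MDP S A) {γ : ℝ} (hγ₀ : 0 ≤ γ) (hγ₁ : γ ≤ 1)
    (θstar θbar rec : S → A → ℝ) (X : ℕ → S → A → S) (W : ℕ → S → A → ℝ)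
    (hW : ∀ t s a, W t s a =
      -(empBellman M γ (X t) θbar s a - empBellman M γ (X t) θstar s a) - θstar s a + rec s a)
    (k : ℕ) :
    ‖vrIter M γ θbar rec X (k + 1) - θstar - auxPath γ W (k + 2)‖ ≤
      (1 - stepSize γ (k + 1)) * ‖vrIter M γ θbar rec X k - θstar - auxPath γ W (k + 1)‖ +
        stepSize γ (k + 1) * (γ * (‖vrIter M γ θbar rec X k - θstar - auxPath γ W (k + 1)‖ +
          ‖auxPath γ W (k + 1)‖)) := by
  have hstep₀ := stepSize_nonneg hγ₁ (k + 1)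
  have hstep₁ := stepSize_le_one hγ₁ (k + 1)
  rw [vrIter_sub_sub_auxPath_succ M γ θstar θbar rec X W hW k]
  refine (norm_add_le _ _).trans ?_
  rw [norm_smul, norm_smul, Real.norm_of_nonneg (sub_nonneg.2 hstep₁), Real.norm_of_nonneg hstep₀]
  gcongr
  refine (norm_empBellman_sub_le M hγ₀ _ _ _).trans ?_
  gcongr
  rw [add_comm]
  exact norm_le_norm_add_norm_sub' _ _

end

/-- Deterministic recursion bound for the variance-reduced iterates in terms of the
auxiliary noise process (adapted cone-contractive SA bound). -/
theorem stmt7 :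
    ∀ (S A : Type) [Fintype S] [Fintype A] [Nonempty S] [Nonempty A]
      (M : MDP S A) (γ : ℝ), 0 < γ → γ < 1 →
      ∀ θstar : S → A → ℝ, bellman M γ θstar = θstar →
      ∀ (X : ℕ → S → A → S) (N : ℕ) (Y : ℕ → S → A → S) (θbar : S → A → ℝ)
        (W : ℕ → S → A → ℝ),
        (∀ t s a, W t s a =
          -(empBellman M γ (X t) θbar s a - empBellman M γ (X t) θstar s a) -
            bellman M γ θstar s a + mcBellman M γ N Y θbar s a) →
      ∀ t : ℕ, 1 ≤ t →
        supNorm (fun s a =>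
            vrIter M γ θbar (mcBellman M γ N Y θbar) X t s a - θstar s a) ≤
          2 / (1 + (1 - γ) * t) *
            (supNorm (fun s a => θbar s a - θstar s a) +
              ∑ ℓ ∈ Finset.Icc 1 t, supNorm (auxPath γ W ℓ)) +
          supNorm (auxPath γ W (t + 1)) := by
  intro S A _ _ _ _ M γ hγ₀ hγ₁ θstar hfix X N Y θbar W hW t _
  simp only [hfix] at hW
  set θ := vrIter M γ θbar (mcBellman M γ N Y θbar) X
  have hθ₀ : θ 0 - θstar - auxPath γ W 1 = θbar - θstar := by
    funext s a
    simp [θ, vrIter, auxPath]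
  have hrec := one_add_sub_mul_le_of_le_stepSize_average hγ₁.le
    (u := fun k => ‖θ k - θstar - auxPath γ W (k + 1)‖) (q := fun ℓ => ‖auxPath γ W ℓ‖)
    (fun _ => norm_nonneg _) (norm_vrIter_sub_sub_auxPath_succ_le M hγ₀.le hγ₁.le _ _ _ X W hW) t
  simp only [hθ₀] at hrec
  have hden := one_le_one_add_sub_mul hγ₁.le t
  rw [supNorm_sub, supNorm_sub]
  simp only [supNorm_eq_norm]
  calc ‖θ t - θstar‖ ≤ ‖θ t - θstar - auxPath γ W (t + 1)‖ + ‖auxPath γ W (t + 1)‖ := by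
        rw [add_comm]
        exact norm_le_norm_add_norm_sub' _ _
    _ ≤ _ := by
        gcongr
        rw [div_mul_eq_mul_div, le_div_iff₀ (by linarith)]
        have : 0 ≤ ∑ ℓ ∈ Finset.Icc 1 t, ‖auxPath γ W ℓ‖ := by positivity
        linarith [norm_nonneg (θbar - θstar)]

end VRQ
end

section
/- Fix δ ∈ (0,1), a number of epochs M ≥ 1, and B > 0. If the recentering point θ̄ satisfies ‖θ̄ − θ*‖_∞ ≤ B and T̃_N is formed from N i.i.d. empirical Bellman operators, then the noise matrix V° = (T̃_N(θ̄) − T̃_N(θ*)) − (T(θ̄) − T(θ*)) satisfies ‖V°‖_∞ ≤ 4·B·√(log(8MD/δ)/N) with probability at least 1 − δ/(3M). -/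
open MeasureTheory ProbabilityTheory Finset

/-!
With `g = γ (max_a θ̄(·, a) - max_a θ*(·, a))`, the `(s, a)` entry of the noise `V°` is the
average of the `N` independent centred variables `g(Yᵢ(s, a)) - E g(Y(s, a))`, and `|g| ≤ B`.
By Hoeffding's lemma each of them is `B²`-sub-Gaussian, so with `L = log (8MD/δ)` the entry
exceeds `4B √(L/N)` with probability at most `2 e^{-8L} ≤ 2 e^{-L}`; a union bound over the `D`
entries leaves a failure probability of at most `2D e^{-L} = δ/(4M)`.
-/

open Real
open scoped NNReal

namespace ProbabilityTheory

variable {Ω : Type*} [MeasurableSpace Ω] {μ : Measure Ω}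

lemma measureReal_abs_sum_range_ge_le_of_iIndepFun {Z : ℕ → Ω → ℝ} (h_indep : iIndepFun Z μ)
    {c : ℝ≥0} {n : ℕ} (h_subG : ∀ i < n, HasSubgaussianMGF (Z i) c μ) {ε : ℝ} (hε : 0 ≤ ε) :
    μ.real {ω | ε ≤ |∑ i ∈ range n, Z i ω|} ≤ 2 * exp (-ε ^ 2 / (2 * n * c)) := by
  have : IsProbabilityMeasure μ := h_indep.isProbabilityMeasure
  have h_upper := HasSubgaussianMGF.measure_sum_range_ge_le_of_iIndepFun h_indep h_subG hε
  have h_lower := HasSubgaussianMGF.measure_sum_range_ge_le_of_iIndepFun (X := fun i => -Z i)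
    (h_indep.comp (fun _ x => -x) fun _ => measurable_neg) (fun i hi => (h_subG i hi).neg) hε
  have h_split : {ω | ε ≤ |∑ i ∈ range n, Z i ω|} ⊆
      {ω | ε ≤ ∑ i ∈ range n, Z i ω} ∪ {ω | ε ≤ ∑ i ∈ range n, (-Z i) ω} := by
    intro ω hω
    simp only [Set.mem_union, Set.mem_ofPred_eq, Pi.neg_apply, sum_neg_distrib] at hω ⊢
    exact (le_abs'.1 hω).symm.imp_right fun h => by linarith
  calc μ.real {ω | ε ≤ |∑ i ∈ range n, Z i ω|}
      ≤ μ.real {ω | ε ≤ ∑ i ∈ range n, Z i ω} + μ.real {ω | ε ≤ ∑ i ∈ range n, (-Z i) ω} :=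
        (measureReal_mono h_split).trans (measureReal_union_le _ _)
    _ ≤ 2 * exp (-ε ^ 2 / (2 * n * c)) := by linarith

variable {E : Type*} [Fintype E] [MeasurableSpace E] [MeasurableSingletonClass E]

lemma integral_comp_eq_sum_of_measure_eq [IsFiniteMeasure μ] {X : Ω → E} (hX : Measurable X)
    {p : E → ℝ} (hp : ∀ x, 0 ≤ p x) (hlaw : ∀ x, μ {ω | X ω = x} = ENNReal.ofReal (p x))
    (f : E → ℝ) :
    ∫ ω, f (X ω) ∂μ = ∑ x, p x * f x := by
  rw [← integral_map hX.aemeasurable (measurable_of_finite f).aestronglyMeasurable,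
    integral_fintype .of_finite]
  refine sum_congr rfl fun x _ => ?_
  rw [measureReal_def, Measure.map_apply hX (measurableSet_singleton x)]
  rw [show X ⁻¹' {x} = {ω | X ω = x} from rfl, hlaw, ENNReal.toReal_ofReal (hp x), smul_eq_mul]

lemma measureReal_abs_sum_range_sub_sum_ge_le [IsProbabilityMeasure μ] {X : ℕ → Ω → E}
    (hX : ∀ i, Measurable (X i)) (h_indep : iIndepFun X μ) {p : E → ℝ} (hp : ∀ x, 0 ≤ p x)
    (hlaw : ∀ i x, μ {ω | X i ω = x} = ENNReal.ofReal (p x)) {f : E → ℝ} {B : ℝ}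
    (hf : ∀ x, |f x| ≤ B) (n : ℕ) {ε : ℝ} (hε : 0 ≤ ε) :
    μ.real {ω | ε ≤ |∑ i ∈ range n, (f (X i ω) - ∑ x, p x * f x)|} ≤
      2 * exp (-ε ^ 2 / (2 * n * B ^ 2)) := by
  have h_mean : ∀ i, μ[fun ω => f (X i ω)] = ∑ x, p x * f x := fun i =>
    integral_comp_eq_sum_of_measure_eq (hX i) hp (hlaw i) f
  have h_subG : ∀ i, HasSubgaussianMGF (fun ω => f (X i ω) - ∑ x, p x * f x)
      ((‖B - -B‖₊ / 2) ^ 2) μ := fun i => by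
    rw [← h_mean i]
    exact hasSubgaussianMGF_of_mem_Icc ((measurable_of_finite f).comp (hX i)).aemeasurable
      (ae_of_all _ fun ω => abs_le.1 (hf _))
  have h_param : (((‖B - -B‖₊ / 2) ^ 2 : ℝ≥0) : ℝ) = B ^ 2 := by
    simp only [NNReal.coe_pow, NNReal.coe_div, coe_nnnorm, Real.norm_eq_abs, sub_neg_eq_add,
      NNReal.coe_ofNat]
    rw [div_pow, sq_abs]
    ring
  have := measureReal_abs_sum_range_ge_le_of_iIndepFun
    (h_indep.comp (fun _ x => f x - ∑ x, p x * f x) fun _ => measurable_of_finite _)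
    (fun i _ => h_subG i) hε (n := n)
  rwa [h_param] at this

end ProbabilityTheory

lemma MeasureTheory.ofReal_one_sub_le_measure_of_compl_subset_iUnion {Ω ι : Type*}
    [MeasurableSpace Ω] {μ : Measure Ω} [IsProbabilityMeasure μ] [Fintype ι] {E : Set Ω}
    {F : ι → Set Ω}    (hEF : Eᶜ ⊆ ⋃ i, F i) {q : ℝ} (hF : ∀ i, μ.real (F i) ≤ q) :
    ENNReal.ofReal (1 - Fintype.card ι * q) ≤ μ E := by
  have h_compl : μ.real Eᶜ ≤ Fintype.card ι * q :=
    calc μ.real Eᶜ ≤ ∑ i, μ.real (F i) :=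
          (measureReal_mono hEF).trans (measureReal_iUnion_fintype_le F)
      _ ≤ Fintype.card ι * q := by simpa using sum_le_sum fun i (_ : i ∈ univ) => hF i
  have h_cover : 1 ≤ μ.real E + μ.real Eᶜ := by
    simpa using measureReal_union_le (μ := μ) E Eᶜ
  exact ENNReal.ofReal_le_of_le_toReal (by rw [← measureReal_def]; linarith)

namespace VRQ

variable {S A : Type} [Fintype S] [Fintype A] [Nonempty A]

lemma abs_le_supNorm [Nonempty S] (θ : S → A → ℝ) (s : S) (a : A) :
    |θ s a| ≤ supNorm θ :=
  le_sup' (fun p : S × A => |θ p.1 p.2|) (mem_univ (s, a))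

lemma supNorm_le_iff [Nonempty S] {θ : S → A → ℝ} {t : ℝ} :
    supNorm θ ≤ t ↔ ∀ s a, |θ s a| ≤ t := by
  simp only [supNorm, sup'_le_iff, mem_univ, true_implies, Prod.forall]

lemma abs_vmax_sub_vmax_le_s8 [Nonempty S] (u v : S → A → ℝ) (s : S) :
    |vmax u s - vmax v s| ≤ supNorm (fun s a => u s a - v s a) := by
  have h a := abs_le.1 (abs_le_supNorm (fun s a => u s a - v s a) s a)
  have hu a : u s a ≤ vmax u s := le_sup' (u s) (mem_univ a)
  have hv a : v s a ≤ vmax v s := le_sup' (v s) (mem_univ a)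
  rw [abs_sub_le_iff, sub_le_iff_le_add, sub_le_iff_le_add]
  exact ⟨sup'_le _ _ fun a _ => by linarith [(h a).2, hv a],
    sup'_le _ _ fun a _ => by linarith [(h a).1, hu a]⟩

noncomputable def recenteringNoise (M : MDP S A) (γ : ℝ) (N : ℕ) (Y : ℕ → S → A → S)
    (θ θ' : S → A → ℝ) : S → A → ℝ :=
  fun s a => (mcBellman M γ N Y θ s a - mcBellman M γ N Y θ' s a) -
    (bellman M γ θ s a - bellman M γ θ' s a)

lemma recenteringNoise_eq (M : MDP S A) (γ : ℝ) {N : ℕ} (hN : N ≠ 0)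
    (Y : ℕ → S → A → S) (θ θ' : S → A → ℝ) (s : S) (a : A) :
    recenteringNoise M γ N Y θ θ' s a =
      (N : ℝ)⁻¹ * ∑ i ∈ range N, (γ * (vmax θ (Y i s a) - vmax θ' (Y i s a)) -
        ∑ s', M.P s a s' * (γ * (vmax θ s' - vmax θ' s'))) := by
  have h_mc : mcBellman M γ N Y θ s a - mcBellman M γ N Y θ' s a =
      (N : ℝ)⁻¹ * ∑ i ∈ range N, γ * (vmax θ (Y i s a) - vmax θ' (Y i s a)) := by
    simp only [mcBellman, empBellman, ← mul_sub, ← sum_sub_distrib, add_sub_add_left_eq_sub]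
  have h_bellman : bellman M γ θ s a - bellman M γ θ' s a =
      ∑ s', M.P s a s' * (γ * (vmax θ s' - vmax θ' s')) := by
    simp only [bellman, add_sub_add_left_eq_sub, ← mul_sub, ← sum_sub_distrib, mul_sum]
    exact sum_congr rfl fun s' _ => by ring
  rw [recenteringNoise, h_mc, h_bellman, sum_sub_distrib, sum_const, card_range, nsmul_eq_mul]
  field_simp

lemma measureReal_abs_recenteringNoise_gt_le {Ω : Type} [MeasurableSpace Ω] {μ : Measure Ω}
    [IsProbabilityMeasure μ] [MeasurableSpace S] [MeasurableSingletonClass S]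
    (M : MDP S A) (γ : ℝ) {N : ℕ} (hN : N ≠ 0) {Y : ℕ → Ω → S → A → S}
    (hY : ∀ i, IsSample μ M (Y i))
    (h_indep : iIndepFun (fun p : ℕ × S × A => fun ω => Y p.1 ω p.2.1 p.2.2) μ)
    {θ θ' : S → A → ℝ} {B : ℝ} (hB : ∀ s', |γ * (vmax θ s' - vmax θ' s')| ≤ B)
    (s : S) (a : A) {t : ℝ} (ht : 0 ≤ t) :
    μ.real {ω | t < |recenteringNoise M γ N (fun i => Y i ω) θ θ' s a|} ≤
      2 * exp (-(N * t ^ 2) / (2 * B ^ 2)) := by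
  have hN_pos : (0 : ℝ) < N := by positivity
  have h_event := measureReal_abs_sum_range_sub_sum_ge_le (μ := μ) (X := fun i ω => Y i ω s a)
    (fun i => (hY i).1 s a)
    (h_indep.precomp (g := fun i => (i, s, a)) fun i j h => congrArg Prod.fst h)
    (M.P_nonneg s a) (fun i => (hY i).2 s a) hB N (mul_nonneg hN_pos.le ht)
  have h_exponent : -((N : ℝ) * t) ^ 2 / (2 * N * B ^ 2) = -(N * t ^ 2) / (2 * B ^ 2) := by
    rw [show -((N : ℝ) * t) ^ 2 = N * -(N * t ^ 2) by ring,
      show (2 * N * B ^ 2 : ℝ) = N * (2 * B ^ 2) by ring, mul_div_mul_left _ _ hN_pos.ne']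
  rw [h_exponent] at h_event
  refine (measureReal_mono fun ω hω => ?_).trans h_event
  simp only [Set.mem_ofPred_eq, recenteringNoise_eq M γ hN, abs_mul,
    abs_inv, Nat.abs_cast] at hω ⊢
  rw [inv_mul_eq_div, lt_div_iff₀ hN_pos] at hω
  linarith

/-- Lemma 1(a): high-probability bound on the recentering noise `V°`. -/
theorem stmt8 :
    ∀ (S A : Type) [Fintype S] [Fintype A] [Nonempty S] [Nonempty A]
      [MeasurableSpace S] [MeasurableSingletonClass S]
      (M : MDP S A) (γ : ℝ), 0 < γ → γ < 1 →
      ∀ θstar : S → A → ℝ, bellman M γ θstar = θstar →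
      ∀ δ : ℝ, 0 < δ → δ < 1 → ∀ Mep : ℕ, 1 ≤ Mep → ∀ B : ℝ, 0 < B →
      ∀ θbar : S → A → ℝ, supNorm (fun s a => θbar s a - θstar s a) ≤ B →
      ∀ (Ω : Type) [MeasurableSpace Ω] (μ : Measure Ω) [IsProbabilityMeasure μ]
        (N : ℕ), 1 ≤ N →
      ∀ Y : ℕ → Ω → S → A → S,
        (∀ i, IsSample μ M (Y i)) →
        iIndepFun
          (fun p : ℕ × S × A => fun ω => Y p.1 ω p.2.1 p.2.2) μ →
      ENNReal.ofReal (1 - δ / (3 * Mep)) ≤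
        μ {ω | supNorm (fun s a =>
            (mcBellman M γ N (fun i => Y i ω) θbar s a -
                mcBellman M γ N (fun i => Y i ω) θstar s a) -
              (bellman M γ θbar s a - bellman M γ θstar s a)) ≤
          4 * B * Real.sqrt (Real.log ((8 : ℝ) * Mep *
              (Fintype.card S * Fintype.card A) / δ) / N)} := by
  intro S A _ _ _ _ _ _ M γ hγ0 hγ1 θstar _ δ hδ0 hδ1 Mep hMep B hB θbar hθbar Ω _ μ _ N hN Y
    hY h_indep
  change _ ≤ μ {ω | supNorm (recenteringNoise M γ N (fun i => Y i ω) θbar θstar) ≤ _}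
  set D : ℝ := Fintype.card S * Fintype.card A
  set L := log (8 * Mep * D / δ) with hL_def
  have hD : 1 ≤ D := one_le_mul_of_one_le_of_one_le (by simp [Nat.one_le_iff_ne_zero])
    (by simp [Nat.one_le_iff_ne_zero])
  have hMep' : (1 : ℝ) ≤ Mep := by exact_mod_cast hMep
  have h_arg : 1 < 8 * Mep * D / δ := by
    rw [one_lt_div hδ0]; nlinarith
  have h_exp_neg_L : exp (-L) = δ / (8 * Mep * D) := by
    rw [exp_neg, exp_log (by linarith), inv_div]
  have h_diff s' : |γ * (vmax θbar s' - vmax θstar s')| ≤ B := by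
    rw [abs_mul, abs_of_pos hγ0]
    exact (mul_le_of_le_one_left (abs_nonneg _) hγ1.le).trans
      ((abs_vmax_sub_vmax_le_s8 θbar θstar s').trans hθbar)
  have h_tail (p : S × A) := measureReal_abs_recenteringNoise_gt_le M γ (N := N) (by omega) hY
    h_indep h_diff p.1 p.2 (t := 4 * B * sqrt (L / N)) (by positivity)
  have h_exponent : -(N * (4 * B * sqrt (L / N)) ^ 2) / (2 * B ^ 2) = -(8 * L) := by
    rw [mul_pow, sq_sqrt (div_nonneg (log_pos h_arg).le (Nat.cast_nonneg _))]
    field_simp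
    rw [hL_def]
    ring
  refine le_trans ?_ (ofReal_one_sub_le_measure_of_compl_subset_iUnion (q := 2 * exp (-L)) ?_
    fun p => (h_tail p).trans (by rw [h_exponent]; gcongr; linarith [log_pos h_arg]))
  · gcongr
    rw [h_exp_neg_L, Fintype.card_prod, Nat.cast_mul]
    field_simp
    nlinarith
  · intro ω hω
    simp only [Set.mem_compl_iff, Set.mem_ofPred_eq, supNorm_le_iff, not_forall, not_le] at hω
    obtain ⟨s, a, h⟩ := hω
    exact Set.mem_iUnion.2 ⟨(s, a), h⟩

end VRQ
end

section
/- Let θ* be the optimal Q-function for the reward r, and let θ̂ be the optimal Q-function for a perturbed reward r̃ : S×A → ℝ (equivalently, the unique fixed point of the Bellman operator with r replaced by r̃). Let π* be a greedy policy for θ*, i.e. π*(s) ∈ argmax_a θ*(s,a), and let π̂ be a greedy policy for θ̂. Then for every state-action pair (s,a): |θ*(s,a) − θ̂(s,a)| ≤ max{ ((I − γP^{π*})^{−1}|r̃ − r|)(s,a), ((I − γP^{π̂})^{−1}|r̃ − r|)(s,a) }, where |r̃ − r| denotes the function (s,a) ↦ |r̃(s,a) − r(s,a)|. -/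
open MeasureTheory ProbabilityTheory Finset

/-!
If `π` is greedy for `θ`, then `max θ(s', ·) - max θ'(s', ·) ≤ θ(s', π s') - θ'(s', π s')` for
every `θ'`. Hence for the fixed points `θ`, `θ'` of two Bellman operators with rewards `r`, `r'` and
the same transitions, `θ - θ' ≤ (r - r') + γ P^π (θ - θ')`. Unrolling this inequality `n` times
gives `θ - θ' ≤ ∑_{k<n} γ^k (P^π)^k |r - r'| + γ^n (P^π)^n (θ - θ')`, and since `P^π` does not
increase sup-norms the remainder vanishes as `n → ∞`, leaving `θ - θ' ≤ (I - γP^π)⁻¹ |r - r'|`.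
Applied once with `(θ*, θ̂, π*)` and once with `(θ̂, θ*, π̂)`, this bounds both signs of `θ* - θ̂`.
-/

namespace VRQ

open Filter Topology

variable {S A : Type} [Fintype A]

theorem exists_abs_le [Fintype S] (u : S → A → ℝ) : ∃ C, ∀ s a, |u s a| ≤ C := by
  obtain ⟨C, hC⟩ := Finite.exists_le fun p : S × A => |u p.1 p.2|
  exact ⟨C, fun s a => hC (s, a)⟩

section PolicyOperator

variable [Fintype S] (M : MDP S A) (π : S → A)

noncomputable def polOpLinear : Module.End ℝ (S → A → ℝ) where
  toFun := polOp M π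
  map_add' u v := by
    funext s a
    simp only [polOp, Pi.add_apply, mul_add, sum_add_distrib]
  map_smul' c u := by
    funext s a
    simp only [polOp, Pi.smul_apply, smul_eq_mul, RingHom.id_apply, mul_sum]
    exact sum_congr rfl fun _ _ => mul_left_comm _ _ _

theorem polOp_iterate_eq_pow (n : ℕ) : (polOp M π)^[n] = ⇑(polOpLinear M π ^ n) := by
  rw [Module.End.coe_pow]
  rfl

theorem monotone_polOp : Monotone (polOp M π) := fun _ _ h s a =>
  sum_le_sum fun s' _ => mul_le_mul_of_nonneg_left (h s' (π s')) (M.P_nonneg s a s')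

theorem abs_polOp_le {u : S → A → ℝ} {C : ℝ} (h : ∀ s a, |u s a| ≤ C) (s : S) (a : A) :
    |polOp M π u s a| ≤ C :=
  calc |∑ s', M.P s a s' * u s' (π s')|
      _ ≤ ∑ s', |M.P s a s' * u s' (π s')| := abs_sum_le_sum_abs _ _
      _ ≤ ∑ s', M.P s a s' * C := sum_le_sum fun s' _ => by
        rw [abs_mul, abs_of_nonneg (M.P_nonneg s a s')]
        exact mul_le_mul_of_nonneg_left (h _ _) (M.P_nonneg s a s')
      _ = C := by rw [← sum_mul, M.P_sum_one, one_mul]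

theorem abs_polOp_iterate_le {u : S → A → ℝ} {C : ℝ} (h : ∀ s a, |u s a| ≤ C) (n : ℕ) :
    ∀ s a, |(polOp M π)^[n] u s a| ≤ C :=
  Set.MapsTo.iterate (f := polOp M π) (s := {u : S → A → ℝ | ∀ s a, |u s a| ≤ C})
    (fun _ hu => abs_polOp_le M π hu) n h

theorem exists_abs_pow_mul_polOp_iterate_le {γ : ℝ} (hγ : 0 ≤ γ) (u : S → A → ℝ) :
    ∃ C, ∀ n s a, |γ ^ n * (polOp M π)^[n] u s a| ≤ C * γ ^ n := by
  obtain ⟨C, hC⟩ := exists_abs_le u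
  refine ⟨C, fun n s a => ?_⟩
  rw [abs_mul, abs_of_nonneg (pow_nonneg hγ n), mul_comm C]
  exact mul_le_mul_of_nonneg_left (abs_polOp_iterate_le M π hC n s a) (pow_nonneg hγ n)

theorem summable_pow_mul_polOp_iterate {γ : ℝ} (hγ0 : 0 ≤ γ) (hγ1 : γ < 1)
    (u : S → A → ℝ) (s : S) (a : A) :
    Summable fun n => γ ^ n * (polOp M π)^[n] u s a := by
  obtain ⟨C, hC⟩ := exists_abs_pow_mul_polOp_iterate_le M π hγ0 u
  exact .of_norm_bounded ((summable_geometric_of_lt_one hγ0 hγ1).mul_left C) (hC · s a)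

theorem tendsto_pow_mul_polOp_iterate {γ : ℝ} (hγ0 : 0 ≤ γ) (hγ1 : γ < 1)
    (u : S → A → ℝ) (s : S) (a : A) :
    Tendsto (fun n => γ ^ n * (polOp M π)^[n] u s a) atTop (𝓝 0) := by
  obtain ⟨C, hC⟩ := exists_abs_pow_mul_polOp_iterate_le M π hγ0 u
  refine squeeze_zero_norm (hC · s a) ?_
  simpa using (tendsto_pow_atTop_nhds_zero_of_lt_one hγ0 hγ1).const_mul C

theorem le_sum_add_of_le_add_polOp {γ : ℝ} (hγ : 0 ≤ γ) {f w : S → A → ℝ}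
    (hf : f ≤ w + γ • polOp M π f) (n : ℕ) :
    f ≤ ∑ k ∈ range n, γ ^ k • (polOp M π)^[k] w + γ ^ n • (polOp M π)^[n] f := by
  induction n with
  | zero => simp
  | succ n ih =>
    have step : (polOp M π)^[n] f ≤ (polOp M π)^[n] w + γ • (polOp M π)^[n + 1] f :=
      calc (polOp M π)^[n] f
          _ ≤ (polOp M π)^[n] (w + γ • polOp M π f) := (monotone_polOp M π).iterate n hf
          _ = _ := by
            simp only [polOp_iterate_eq_pow, map_add, map_smul, pow_succ, Module.End.mul_apply]
            rfl
    calc f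
        _ ≤ ∑ k ∈ range n, γ ^ k • (polOp M π)^[k] w + γ ^ n • (polOp M π)^[n] f := ih
        _ ≤ ∑ k ∈ range n, γ ^ k • (polOp M π)^[k] w +
              γ ^ n • ((polOp M π)^[n] w + γ • (polOp M π)^[n + 1] f) :=
          add_le_add_right (smul_le_smul_of_nonneg_left step (pow_nonneg hγ n)) _
        _ = _ := by rw [sum_range_succ, smul_add, smul_smul, ← pow_succ, add_assoc]

theorem le_resolvent_of_le_add_polOp {γ : ℝ} (hγ0 : 0 ≤ γ) (hγ1 : γ < 1) {f w : S → A → ℝ}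
    (hf : f ≤ w + γ • polOp M π f) : f ≤ resolvent M γ π w := fun s a => by
  have hlim := (summable_pow_mul_polOp_iterate M π hγ0 hγ1 w s a).hasSum.tendsto_sum_nat.add
    (tendsto_pow_mul_polOp_iterate M π hγ0 hγ1 f s a)
  rw [add_zero] at hlim
  refine ge_of_tendsto' hlim fun n => ?_
  simpa only [Pi.add_apply, Finset.sum_apply, Pi.smul_apply, smul_eq_mul] using
    le_sum_add_of_le_add_polOp M π hγ0 hf n s a

end PolicyOperator

section Bellman

variable [Nonempty A]

theorem vmax_sub_vmax_le_of_greedy {θ : S → A → ℝ} {π : S → A} {s : S}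
    (hπ : θ s (π s) = vmax θ s) (θ' : S → A → ℝ) :
    vmax θ s - vmax θ' s ≤ θ s (π s) - θ' s (π s) := by
  have : θ' s (π s) ≤ vmax θ' s := le_sup' (θ' s) (mem_univ (π s))
  linarith

variable [Fintype S]

theorem bellman_sub_bellman_le {M M' : MDP S A} (hP : M'.P = M.P) {γ : ℝ} (hγ : 0 ≤ γ)
    {θ : S → A → ℝ} {π : S → A} (hπ : ∀ s, θ s (π s) = vmax θ s) (θ' : S → A → ℝ) :
    bellman M γ θ - bellman M' γ θ' ≤ M.r - M'.r + γ • polOp M π (θ - θ') := fun s a => by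
  have hnext : ∑ s', M.P s a s' * vmax θ s' - ∑ s', M.P s a s' * vmax θ' s' ≤
      polOp M π (θ - θ') s a := by
    rw [← sum_sub_distrib]
    refine sum_le_sum fun s' _ => ?_
    rw [← mul_sub]
    exact mul_le_mul_of_nonneg_left (vmax_sub_vmax_le_of_greedy (hπ s') θ') (M.P_nonneg s a s')
  have := mul_le_mul_of_nonneg_left hnext hγ
  simp only [bellman, hP, Pi.add_apply, Pi.sub_apply, Pi.smul_apply, smul_eq_mul] at this ⊢
  linarith

theorem sub_le_resolvent_of_greedy {M M' : MDP S A} (hP : M'.P = M.P) {γ : ℝ} (hγ0 : 0 ≤ γ)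
    (hγ1 : γ < 1) {θ θ' : S → A → ℝ} (hθ : bellman M γ θ = θ) (hθ' : bellman M' γ θ' = θ')
    {π : S → A} (hπ : ∀ s, θ s (π s) = vmax θ s) {w : S → A → ℝ} (hw : M.r - M'.r ≤ w) :
    θ - θ' ≤ resolvent M γ π w := by
  refine le_resolvent_of_le_add_polOp M π hγ0 hγ1 ?_
  calc θ - θ'
      _ = bellman M γ θ - bellman M' γ θ' := by rw [hθ, hθ']
      _ ≤ M.r - M'.r + γ • polOp M π (θ - θ') := bellman_sub_bellman_le hP hγ0 hπ θ'
      _ ≤ w + γ • polOp M π (θ - θ') := add_le_add_left hw _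

end Bellman

/-- Elementwise bound on `|θ* - θ̂|` under a reward perturbation (Lemma 6). -/
theorem stmt17 :
    ∀ (S A : Type) [Fintype S] [Fintype A] [Nonempty S] [Nonempty A]
      (M : MDP S A) (γ : ℝ), 0 < γ → γ < 1 →
      ∀ θstar : S → A → ℝ, bellman M γ θstar = θstar →
      ∀ (rt : S → A → ℝ) (θhat : S → A → ℝ),
        bellman { M with r := rt } γ θhat = θhat →
      ∀ πstar : S → A, (∀ s, θstar s (πstar s) = vmax θstar s) →
      ∀ πhat : S → A, (∀ s, θhat s (πhat s) = vmax θhat s) →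
      ∀ s a, |θstar s a - θhat s a| ≤
        max (resolvent M γ πstar (fun s' a' => |rt s' a' - M.r s' a'|) s a)
          (resolvent M γ πhat (fun s' a' => |rt s' a' - M.r s' a'|) s a) := by
  intro S A _ _ _ _ M γ hγ0 hγ1 θstar hθstar rt θhat hθhat πstar hπstar πhat hπhat s a
  have hstar := sub_le_resolvent_of_greedy (M := M) (M' := { M with r := rt }) rfl hγ0.le hγ1
    hθstar hθhat hπstar (w := fun s a => |rt s a - M.r s a|)
    (fun s a => (le_abs_self _).trans (abs_sub_comm _ _).le) s a
  have hhat := sub_le_resolvent_of_greedy (M := { M with r := rt }) (M' := M) rfl hγ0.le hγ1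
    hθhat hθstar hπhat (w := fun s a => |rt s a - M.r s a|) (fun s a => le_abs_self _) s a
  exact abs_sub_le_iff.mpr ⟨hstar.trans (le_max_left _ _), hhat.trans (le_max_right _ _)⟩

end VRQ
end

section
/- Let θ* be the optimal Q-function for the reward r, and let θ̂ be the optimal Q-function for a perturbed reward r̃ : S×A → ℝ, and let π* be a greedy policy for θ*, i.e. π*(s) ∈ argmax_a θ*(s,a). Then the elementwise positive part satisfies max{θ*(s,a) − θ̂(s,a), 0} ≤ ((I − γP^{π*})^{−1}|r̃ − r|)(s,a) for every state-action pair (s,a), where |r̃ − r| denotes the function (s,a) ↦ |r̃(s,a) − r(s,a)|. -/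
/-!
The gap `u = θ* - θ̂` is a subsolution of the policy evaluation equation of `π*`:
`u ≤ |r̃ - r| + γ P^{π*} u`, because `max θ*(s',·) - max θ̂(s',·)` is at most the gap at the
greedy action `π*(s')`. Since `P^{π*}` is monotone, iterating gives
`u ≤ ∑_{k<n} γ^k (P^{π*})^k |r̃ - r| + γ^n (P^{π*})^n u`, and the last term tends to `0` because
`(P^{π*})^n u` stays below `max u`. The positive part follows as the resolvent of a nonnegative
function is nonnegative.
-/

open MeasureTheory ProbabilityTheory Finset

namespace VRQ

open Filter Topology

theorem le_sum_pow_smul_add_of_le_add_smul {E : Type*} [AddCommGroup E] [PartialOrder E]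
    [IsOrderedAddMonoid E] [Module ℝ E] [PosSMulMono ℝ E] {L : Module.End ℝ E}
    (hL : Monotone L) {γ : ℝ} (hγ : 0 ≤ γ) {e u : E} (hu : u ≤ e + γ • L u) (n : ℕ) :
    u ≤ ∑ k ∈ range n, γ ^ k • (L ^ k) e + γ ^ n • (L ^ n) u := by
  induction n with
  | zero => simp
  | succ n ih =>
    have hLn : (L ^ n) u ≤ (L ^ n) e + γ • (L ^ (n + 1)) u := by
      have := (Module.End.coe_pow L n ▸ hL.iterate n) hu
      rw [map_add, map_smul] at this
      rwa [pow_succ, Module.End.mul_apply]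
    calc u ≤ ∑ k ∈ range n, γ ^ k • (L ^ k) e + γ ^ n • (L ^ n) u := ih
      _ ≤ ∑ k ∈ range n, γ ^ k • (L ^ k) e +
            γ ^ n • ((L ^ n) e + γ • (L ^ (n + 1)) u) := by
        gcongr
      _ = ∑ k ∈ range (n + 1), γ ^ k • (L ^ k) e + γ ^ (n + 1) • (L ^ (n + 1)) u := by
        rw [sum_range_succ, smul_add, smul_smul, ← pow_succ, add_assoc]

theorem vmax_sub_vmax_le {S A : Type} [Fintype A] [Nonempty A] {θ θ' : S → A → ℝ}
    {π : S → A} (hπ : ∀ s, θ s (π s) = vmax θ s) (s : S) :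
    vmax θ s - vmax θ' s ≤ θ s (π s) - θ' s (π s) := by
  have : θ' s (π s) ≤ vmax θ' s := le_sup' (θ' s) (mem_univ _)
  linarith [hπ s]

variable {S A : Type} [Fintype S] [Fintype A]

noncomputable def polOpₗ (M : MDP S A) (π : S → A) : Module.End ℝ (S → A → ℝ) where
  toFun := polOp M π
  map_add' f g := by ext s a; simp [polOp, mul_add, sum_add_distrib]
  map_smul' c f := by ext s a; simp [polOp, mul_sum, mul_left_comm]

theorem coe_polOpₗ_pow (M : MDP S A) (π : S → A) (n : ℕ) :
    ⇑(polOpₗ M π ^ n) = (polOp M π)^[n] :=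
  Module.End.coe_pow _ n

theorem polOp_mono (M : MDP S A) (π : S → A) : Monotone (polOp M π) :=
  fun _ _ h s a => sum_le_sum fun s' _ =>
    mul_le_mul_of_nonneg_left (h s' (π s')) (M.P_nonneg s a s')

theorem polOp_le_const (M : MDP S A) (π : S → A) {f : S → A → ℝ} {C : ℝ}
    (h : ∀ s a, f s a ≤ C) (s : S) (a : A) : polOp M π f s a ≤ C :=
  calc polOp M π f s a ≤ ∑ s', M.P s a s' * C :=
        sum_le_sum fun s' _ => mul_le_mul_of_nonneg_left (h s' (π s')) (M.P_nonneg s a s')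
    _ = C := by rw [← sum_mul, M.P_sum_one, one_mul]

theorem iterate_polOp_le_const (M : MDP S A) (π : S → A) {f : S → A → ℝ} {C : ℝ}
    (h : ∀ s a, f s a ≤ C) (n : ℕ) (s : S) (a : A) : (polOp M π)^[n] f s a ≤ C := by
  induction n generalizing s a with
  | zero => exact h s a
  | succ n ih => rw [Function.iterate_succ_apply']; exact polOp_le_const M π ih s a

theorem iterate_polOp_nonneg (M : MDP S A) (π : S → A) {f : S → A → ℝ} (hf : 0 ≤ f)
    (n : ℕ) :
    0 ≤ (polOp M π)^[n] f := by
  have h0 : (polOp M π)^[n] 0 = 0 := Function.iterate_fixed (by ext; simp [polOp]) n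
  exact h0 ▸ (polOp_mono M π).iterate n hf

theorem exists_iterate_polOp_le (M : MDP S A) (π : S → A) (f : S → A → ℝ) :
    ∃ C, ∀ n s a, (polOp M π)^[n] f s a ≤ C := by
  obtain ⟨C, hC⟩ := Finite.exists_le fun p : S × A => f p.1 p.2
  exact ⟨C, iterate_polOp_le_const M π fun s a => hC (s, a)⟩

theorem hasSum_resolvent (M : MDP S A) {γ : ℝ} (π : S → A) (hγ0 : 0 ≤ γ) (hγ1 : γ < 1)
    {e : S → A → ℝ} (he : 0 ≤ e) (s : S) (a : A) :
    HasSum (fun k => γ ^ k * (polOp M π)^[k] e s a) (resolvent M γ π e s a) := by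
  obtain ⟨C, hC⟩ := exists_iterate_polOp_le M π e
  refine (Summable.of_nonneg_of_le (fun k => ?_) (fun k => ?_)
    ((summable_geometric_of_lt_one hγ0 hγ1).mul_right C)).hasSum
  · exact mul_nonneg (pow_nonneg hγ0 k) (iterate_polOp_nonneg M π he k s a)
  · exact mul_le_mul_of_nonneg_left (hC k s a) (pow_nonneg hγ0 k)

theorem resolvent_nonneg (M : MDP S A) {γ : ℝ} (π : S → A) (hγ0 : 0 ≤ γ) (hγ1 : γ < 1)
    {e : S → A → ℝ} (he : 0 ≤ e) : 0 ≤ resolvent M γ π e := fun s a =>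
  (hasSum_resolvent M π hγ0 hγ1 he s a).nonneg fun k =>
    mul_nonneg (pow_nonneg hγ0 k) (iterate_polOp_nonneg M π he k s a)

theorem le_resolvent_of_le_add_smul_polOp (M : MDP S A) {γ : ℝ} (π : S → A) (hγ0 : 0 ≤ γ)
    (hγ1 : γ < 1) {e u : S → A → ℝ} (he : 0 ≤ e) (hu : u ≤ e + γ • polOp M π u) :
    u ≤ resolvent M γ π e := by
  intro s a
  obtain ⟨C, hC⟩ := exists_iterate_polOp_le M π u
  have hpartial :
      ∀ n, u s a ≤ ∑ k ∈ range n, γ ^ k * (polOp M π)^[k] e s a + γ ^ n * C := by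
    intro n
    have := le_sum_pow_smul_add_of_le_add_smul (L := polOpₗ M π) (polOp_mono M π) hγ0 hu n s a
    simp only [coe_polOpₗ_pow, Finset.sum_apply, Pi.add_apply, Pi.smul_apply, smul_eq_mul] at this
    exact this.trans (by gcongr; exact hC n s a)
  have hlim : Tendsto (fun n => ∑ k ∈ range n, γ ^ k * (polOp M π)^[k] e s a + γ ^ n * C)
      atTop (𝓝 (resolvent M γ π e s a + 0 * C)) :=
    (hasSum_resolvent M π hγ0 hγ1 he s a).tendsto_sum_nat.add
      ((tendsto_pow_atTop_nhds_zero_of_lt_one hγ0 hγ1).mul_const C)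
  exact ge_of_tendsto' (by simpa using hlim) hpartial

theorem sub_le_abs_add_smul_polOp [Nonempty A] (M : MDP S A) {γ : ℝ} (hγ : 0 ≤ γ)
    {θ θ' r' : S → A → ℝ} (hθ : bellman M γ θ = θ)
    (hθ' : bellman { M with r := r' } γ θ' = θ')
    {π : S → A} (hπ : ∀ s, θ s (π s) = vmax θ s) :
    θ - θ' ≤ (fun s a => |r' s a - M.r s a|) + γ • polOp M π (θ - θ') := by
  intro s a
  have hvmax : ∑ s', M.P s a s' * vmax θ s' - ∑ s', M.P s a s' * vmax θ' s'
      ≤ polOp M π (θ - θ') s a := by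
    rw [← sum_sub_distrib]
    exact sum_le_sum fun s' _ => by
      rw [← mul_sub]
      exact mul_le_mul_of_nonneg_left (vmax_sub_vmax_le hπ s') (M.P_nonneg s a s')
  have hr : M.r s a - r' s a ≤ |r' s a - M.r s a| := abs_sub_comm (r' s a) _ ▸ le_abs_self _
  calc (θ - θ') s a
      = M.r s a - r' s a +
          γ * (∑ s', M.P s a s' * vmax θ s' - ∑ s', M.P s a s' * vmax θ' s') := by
        conv_lhs => rw [← hθ, ← hθ']
        simp only [Pi.sub_apply, bellman]
        ring
    _ ≤ |r' s a - M.r s a| + γ * polOp M π (θ - θ') s a := by gcongr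

/-- Elementwise bound on the positive part `(θ* - θ̂)₊` under a reward perturbation. -/
theorem stmt18 :
    ∀ (S A : Type) [Fintype S] [Fintype A] [Nonempty S] [Nonempty A]
      (M : MDP S A) (γ : ℝ), 0 < γ → γ < 1 →
      ∀ θstar : S → A → ℝ, bellman M γ θstar = θstar →
      ∀ (rt : S → A → ℝ) (θhat : S → A → ℝ),
        bellman { M with r := rt } γ θhat = θhat →
      ∀ πstar : S → A, (∀ s, θstar s (πstar s) = vmax θstar s) →
      ∀ s a, max (θstar s a - θhat s a) 0 ≤
        resolvent M γ πstar (fun s' a' => |rt s' a' - M.r s' a'|) s a := by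
  intro S A _ _ _ _ M γ hγ0 hγ1 θstar hstar rt θhat hhat πstar hπ s a
  have he : (0 : S → A → ℝ) ≤ fun s' a' => |rt s' a' - M.r s' a'| := fun _ _ => abs_nonneg _
  exact max_le
    (le_resolvent_of_le_add_smul_polOp M πstar hγ0.le hγ1 he
      (sub_le_abs_add_smul_polOp M hγ0.le hstar hhat hπ) s a)
    (resolvent_nonneg M πstar hγ0.le hγ1 he s a)

end VRQ
end
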